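/- For x, z ≥ 0 and y ∈ [0, π/2], G(x, yi, z) + S(x, yi, z) = x − artanh(sinh(x)·sinh(z)/(cos(y) + cosh(x)·cosh(z))). -/

import Mathlib

open Real Complex

/-- The gap function `G` (logarithmic form, principal branch complex logarithm). -/
noncomputable def G (x y z : ℂ) : ℂ :=
  Complex.log ((Complex.exp x + Complex.exp (y + z)) /
    (Complex.exp (-x) + Complex.exp (y + z)))

/-- Complex inverse hyperbolic tangent (principal branch, imaginary part in `(-π/2, π/2]`). -/
noncomputable def artanhC (z : ℂ) : ℂ := (1/2) * Complex.log ((1 + z) / (1 - z))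

/-- The projection function `S` of the complexified McShane identity. -/
noncomputable def S (x y z : ℂ) : ℂ :=
  artanhC (Complex.sinh x * Complex.sinh y / (Complex.cosh z + Complex.cosh x * Complex.cosh y))

/-- The real inverse hyperbolic tangent. -/
noncomputable def artanh (x : ℝ) : ℝ := (1/2) * Real.log ((1 + x) / (1 - x))

/-!
Put `μ = (cosh z + cosh x cos y) + i sinh x sin y`, so that `Re μ > 0` when `cos y ≥ 0`. The
argument of `S(x, yi, z)` is `i Im μ / Re μ`, hence `S = ½ log (μ / μ̄) = i arg μ`. The argument `ζ`
of the logarithm in `G(x, yi, z)` is a positive multiple of `μ̄`, because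
`(eˣ + e^{z+yi}) · conj (e⁻ˣ + e^{z+yi}) = 2 e^z μ̄`; so `arg ζ = -arg μ`, the imaginary parts
cancel, and `G + S = log ‖ζ‖`. Finally `‖e^a + e^{b+yi}‖² = 2 e^{a+b} (cosh (a - b) + cos y)`
turns `log ‖ζ‖` into `x - artanh (sinh x sinh z / (cos y + cosh x cosh z))`.
-/

open ComplexConjugate

lemma div_conj_eq_exp_two_arg_mul_I {μ : ℂ} (hμ : μ ≠ 0) :
    μ / conj μ = Complex.exp (2 * arg μ * I) := by
  have hnorm : (‖μ‖ : ℂ) ≠ 0 := by exact_mod_cast norm_ne_zero_iff.mpr hμ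
  conv_lhs => rw [← norm_mul_exp_arg_mul_I μ]
  rw [map_mul, Complex.conj_ofReal, ← Complex.exp_conj, map_mul, Complex.conj_ofReal,
    Complex.conj_I, mul_div_mul_left _ _ hnorm, ← Complex.exp_sub]
  ring_nf

lemma log_div_conj_of_re_pos {μ : ℂ} (hμ : 0 < μ.re) :
    Complex.log (μ / conj μ) = 2 * arg μ * I := by
  have hne : μ ≠ 0 := fun h => by simp [h] at hμ
  obtain ⟨hlo, hhi⟩ := abs_lt.mp (abs_arg_lt_pi_div_two_iff.mpr (Or.inl hμ))
  rw [div_conj_eq_exp_two_arg_mul_I hne, Complex.log_exp] <;>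
    simp only [mul_im, mul_re, I_re, I_im, ofReal_re, ofReal_im, re_ofNat, im_ofNat] <;>
    linarith

lemma artanhC_mul_I_div {a : ℝ} (ha : 0 < a) (b : ℝ) :
    artanhC (b * I / a) = arg (a + b * I) * I := by
  have ha' : (a : ℂ) ≠ 0 := by exact_mod_cast ha.ne'
  have hquot : (1 + b * I / a) / (1 - b * I / a) = (a + b * I) / conj (a + b * I) := by
    simp only [map_add, map_mul, Complex.conj_ofReal, Complex.conj_I]
    field_simp
    ring_nf
  rw [artanhC, hquot, log_div_conj_of_re_pos (by simpa using ha)]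
  ring

lemma S_ofReal_mul_I {x y z : ℝ} (hμ : 0 < Real.cosh z + Real.cosh x * Real.cos y) :
    S x (y * I) z =
      arg ((Real.cosh z + Real.cosh x * Real.cos y : ℝ) +
        (Real.sinh x * Real.sin y : ℝ) * I) * I := by
  rw [← artanhC_mul_I_div hμ, S, Complex.sinh_mul_I, Complex.cosh_mul_I]
  push_cast
  ring_nf

lemma exp_add_exp_mul_conj_exp_add_exp (x y z : ℝ) :
    (Complex.exp x + Complex.exp (y * I + z)) *
        conj (Complex.exp (-x) + Complex.exp (y * I + z)) =
      2 * Real.exp z *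
        conj ((Real.cosh z + Real.cosh x * Real.cos y : ℝ) +
          (Real.sinh x * Real.sin y : ℝ) * I) := by
  simp only [map_add, map_mul, map_neg, ← Complex.exp_conj, Complex.conj_ofReal, Complex.conj_I]
  push_cast
  simp only [Complex.cosh, Complex.sinh, Complex.cos, Complex.sin, Complex.exp_add,
    Complex.exp_neg, neg_mul, mul_neg]
  have hx := Complex.exp_ne_zero x
  have hz := Complex.exp_ne_zero z
  have hy := Complex.exp_ne_zero (y * I)
  field_simp
  linear_combination
    (Complex.exp z * (Complex.exp x ^ 2 - 1) * (1 - Complex.exp (y * I) ^ 2)) * I_sq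

lemma normSq_exp_add_exp_mul_I_add (a y b : ℝ) :
    normSq (Complex.exp a + Complex.exp (y * I + b)) =
      2 * Real.exp (a + b) * (Real.cosh (a - b) + Real.cos y) := by
  simp only [normSq_apply, add_re, add_im, Complex.exp_re, Complex.exp_im, mul_re, mul_im,
    ofReal_re, ofReal_im, I_re, I_im, mul_zero, mul_one, sub_zero, zero_add, add_zero,
    Real.cos_zero, Real.sin_zero]
  rw [Real.cosh_eq, Real.exp_add, Real.exp_sub, Real.exp_neg, Real.exp_sub]
  have ha := Real.exp_pos a
  have hb := Real.exp_pos b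
  field_simp
  linear_combination Real.exp b ^ 2 * Real.sin_sq_add_cos_sq y

lemma artanh_sinh_mul_sinh_div {y : ℝ} (hy : -1 < Real.cos y) (x z : ℝ) :
    _root_.artanh (Real.sinh x * Real.sinh z / (Real.cos y + Real.cosh x * Real.cosh z)) =
      (Real.log (Real.cos y + Real.cosh (x + z)) -
        Real.log (Real.cos y + Real.cosh (x - z))) / 2 := by
  have hD : Real.cos y + Real.cosh x * Real.cosh z ≠ 0 := by
    nlinarith [Real.one_le_cosh x, Real.one_le_cosh z]
  have hquot : (1 + Real.sinh x * Real.sinh z / (Real.cos y + Real.cosh x * Real.cosh z)) /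
      (1 - Real.sinh x * Real.sinh z / (Real.cos y + Real.cosh x * Real.cosh z)) =
      (Real.cos y + Real.cosh (x + z)) / (Real.cos y + Real.cosh (x - z)) := by
    rw [Real.cosh_add, Real.cosh_sub, one_add_div hD, one_sub_div hD,
      div_div_div_cancel_right₀ hD]
    ring_nf
  rw [_root_.artanh, hquot, Real.log_div (by linarith [Real.one_le_cosh (x + z)])
    (by linarith [Real.one_le_cosh (x - z)])]
  ring

lemma log_norm_exp_add_exp_div {y : ℝ} (hy : -1 < Real.cos y) (x z : ℝ) :
    Real.log ‖(Complex.exp x + Complex.exp (y * I + z)) /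
        (Complex.exp (-x) + Complex.exp (y * I + z))‖ =
      x - _root_.artanh (Real.sinh x * Real.sinh z / (Real.cos y + Real.cosh x * Real.cosh z)) := by
  have hpos (a : ℝ) : 0 < Real.cosh a + Real.cos y := by linarith [Real.one_le_cosh a]
  have hlog (a b : ℝ) : Real.log (normSq (Complex.exp a + Complex.exp (y * I + b))) =
      Real.log 2 + (a + b) + Real.log (Real.cosh (a - b) + Real.cos y) := by
    rw [normSq_exp_add_exp_mul_I_add, Real.log_mul (by positivity) (hpos _).ne',
      Real.log_mul two_ne_zero (Real.exp_pos _).ne', Real.log_exp]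
  have hne (a b : ℝ) : normSq (Complex.exp a + Complex.exp (y * I + b)) ≠ 0 := by
    rw [normSq_exp_add_exp_mul_I_add]
    exact (mul_pos (by positivity) (hpos _)).ne'
  have hhalf (ζ : ℂ) : Real.log ‖ζ‖ = Real.log (normSq ζ) / 2 := by
    rw [normSq_eq_norm_sq, Real.log_pow]
    ring
  rw [hhalf, map_div₀, Real.log_div (hne x z) (by exact_mod_cast hne (-x) z), ← ofReal_neg,
    hlog, hlog, artanh_sinh_mul_sinh_div hy, show -x - z = -(x + z) by ring, Real.cosh_neg]
  ring_nf

lemma G_ofReal_mul_I {x y z : ℝ} (hy : 0 ≤ Real.cos y) :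
    G x (y * I) z =
      ((x - _root_.artanh (Real.sinh x * Real.sinh z /
        (Real.cos y + Real.cosh x * Real.cosh z)) : ℝ) : ℂ) -
      arg ((Real.cosh z + Real.cosh x * Real.cos y : ℝ) +
        (Real.sinh x * Real.sin y : ℝ) * I) * I := by
  set μ : ℂ := (Real.cosh z + Real.cosh x * Real.cos y : ℝ) + (Real.sinh x * Real.sin y : ℝ) * I
    with hμ_def
  have hμ : 0 < μ.re := by
    simp only [μ, add_re, ofReal_re, mul_re, I_re, I_im, ofReal_im, mul_zero]
    nlinarith [Real.one_le_cosh z, Real.cosh_pos x]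
  have hM : 0 < normSq (Complex.exp (-x) + Complex.exp (y * I + z)) := by
    rw [← ofReal_neg, normSq_exp_add_exp_mul_I_add]
    exact mul_pos (by positivity) (by linarith [Real.one_le_cosh (-x - z)])
  have hζ : (Complex.exp x + Complex.exp (y * I + z)) /
      (Complex.exp (-x) + Complex.exp (y * I + z)) =
      ((2 * Real.exp z / normSq (Complex.exp (-x) + Complex.exp (y * I + z)) : ℝ) : ℂ) *
        conj μ := by
    rw [← mul_div_mul_right _ _ ((map_ne_zero conj).mpr ((map_ne_zero normSq).mp hM.ne')),
      mul_conj, exp_add_exp_mul_conj_exp_add_exp, ← hμ_def]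
    push_cast
    ring
  have hμ_arg : arg μ ≠ π := by
    obtain ⟨-, hlt⟩ := abs_lt.mp (abs_arg_lt_pi_div_two_iff.mpr (Or.inl hμ))
    exact (hlt.trans (by linarith [pi_pos])).ne
  rw [G, Complex.log, log_norm_exp_add_exp_div (by linarith), hζ,
    arg_real_mul _ (by positivity), arg_conj, if_neg hμ_arg]
  push_cast
  ring

theorem G_add_S_of_imaginary_y_general (x y z : ℝ) (hy : y ∈ Set.Icc 0 (π/2)) :
    G (x : ℂ) ((y : ℂ) * Complex.I) (z : ℂ) + S (x : ℂ) ((y : ℂ) * Complex.I) (z : ℂ) =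
      ((x - _root_.artanh (Real.sinh x * Real.sinh z /
        (Real.cos y + Real.cosh x * Real.cosh z))) : ℝ) := by
  have hcos : 0 ≤ Real.cos y := Real.cos_nonneg_of_mem_Icc ⟨by linarith [hy.1, pi_pos], hy.2⟩
  rw [G_ofReal_mul_I hcos, S_ofReal_mul_I (by nlinarith [Real.one_le_cosh z, Real.cosh_pos x])]
  ring

theorem G_add_S_of_imaginary_y (x y z : ℝ) (hx : 0 ≤ x) (hz : 0 ≤ z)
    (hy : y ∈ Set.Icc 0 (π/2)) :
    G (x : ℂ) ((y : ℂ) * Complex.I) (z : ℂ) + S (x : ℂ) ((y : ℂ) * Complex.I) (z : ℂ) =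
      ((x - _root_.artanh (Real.sinh x * Real.sinh z /
        (Real.cos y + Real.cosh x * Real.cosh z))) : ℝ) :=
  G_add_S_of_imaginary_y_general x y z hy
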